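/- Let (X,d) be a finite nonempty ultrametric space and let Δ(X,d) denote the number of open balls of (X,d) that are not centered spheres of (X,d). Then an UGVL-extension (Y,ρ) of (X,d) is minimal if and only if card Y = Δ(X,d) + card X. -/

import Mathlib

/-- `d` is an ultrametric on `X`: a nonnegative, symmetric function vanishing
exactly on the diagonal and satisfying the strong triangle inequality. -/
def IsUltrametricOn {X : Type*} (d : X → X → ℝ) : Prop :=
  (∀ x y, 0 ≤ d x y) ∧ (∀ x y, d x y = d y x) ∧
  (∀ x y, d x y = 0 ↔ x = y) ∧
  (∀ x y z, d x y ≤ max (d x z) (d z y))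

/-- `B` is an open ball of the space `(X, d)`. -/
def IsOpenBallOf {X : Type*} (d : X → X → ℝ) (B : Set X) : Prop :=
  ∃ c : X, ∃ r : ℝ, 0 < r ∧ B = {x | d c x < r}

/-- `C` is a centered sphere of the space `(X, d)`. -/
def IsCenteredSphereOf {X : Type*} (d : X → X → ℝ) (C : Set X) : Prop :=
  ∃ c ∈ C, ∃ r : ℝ, 0 ≤ r ∧ C = {x | d x c = r} ∪ {c}

/-- The diameter `sup {d x y : x, y ∈ A}` of a subset `A` of `(X, d)`. -/
noncomputable def setDiam {X : Type*} (d : X → X → ℝ) (A : Set X) : ℝ :=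
  sSup {r | ∃ x ∈ A, ∃ y ∈ A, r = d x y}

/-- A space is locally finite if all of its open balls are finite sets. -/
def IsLocallyFiniteOn {X : Type*} (d : X → X → ℝ) : Prop :=
  ∀ B : Set X, IsOpenBallOf d B → B.Finite

/-- The maximum of the (nonnegative) labels of the vertices of a walk `p`. -/
def walkMax {X : Type*} {T : SimpleGraph X} (l : X → ℝ) {u v : X} (p : T.Walk u v) : ℝ :=
  (p.support.map l).foldr max 0

/-- The function `d` is generated by the tree `T` with nonnegative vertex labeling `l`,
i.e. `d u u = 0` and, for `u ≠ v`, `d u v` is the maximum of the labels of the vertices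
on the (unique) path joining `u` and `v` in `T`. -/
def GeneratedBy {X : Type*} (d : X → X → ℝ) (T : SimpleGraph X) (l : X → ℝ) : Prop :=
  T.IsTree ∧ (∀ x, 0 ≤ l x) ∧ (∀ u, d u u = 0) ∧
  ∀ u v : X, u ≠ v → ∀ p : T.Walk u v, p.IsPath → d u v = walkMax l p

/-- `(X, d)` belongs to the class UGVL: it is generated by some labeled tree. -/
def IsUGVL {X : Type*} (d : X → X → ℝ) : Prop :=
  ∃ (T : SimpleGraph X) (l : X → ℝ), GeneratedBy d T l

/-- `(Y, ρ)` is an UGVL-extension of `(X, d)`: an ultrametric UGVL-space into which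
`(X, d)` embeds isometrically. -/
def IsUGVLExtension {X Y : Type*} (d : X → X → ℝ) (ρ : Y → Y → ℝ) : Prop :=
  IsUltrametricOn ρ ∧ IsUGVL ρ ∧ ∃ Φ : X → Y, ∀ x y : X, ρ (Φ x) (Φ y) = d x y

/-- An UGVL-extension is minimal if no proper subspace of it is an UGVL-extension of
`(X, d)`. -/
def IsMinimalUGVLExtension {X Y : Type*} (d : X → X → ℝ) (ρ : Y → Y → ℝ) : Prop :=
  IsUGVLExtension d ρ ∧
  ∀ Y₀ : Set Y, Y₀ ≠ Set.univ → ¬ IsUGVLExtension d (fun a b : Y₀ => ρ a b)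

/-!
In a space generated by a labeled tree, a vertex `w` of maximal label on the path between
`a ≠ b` lies within `ρ a b` of `a`, while every other point is at least `ρ a b` away from `w`.
For a ball `B` of `X` of diameter `r > 0` this yields an apex: a point within `r` of the image
of `B` and isolated at scale `r`. If `B` is not a centered sphere, its apex lies outside the
image of `X` (otherwise its preimage would be a center of `B`), and it determines `B`.

Conversely, take `X` together with one apex for each such ball. In this space every ball is a
centered sphere: the trace of a ball on `X` is a ball of `X` with the same diameter, and its
center, or else its apex, centers the ball. A finite ultrametric space whose balls are all
centered spheres is generated by its tree of balls, in which the chosen center of each ball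
carries the diameter of that ball as its label and is joined to the chosen center of the
next larger ball.

So every UGVL-extension contains one with exactly `Δ(X, d) + card X` points, and this gives
both directions.
-/

open Set

namespace IsUltrametricOn

variable {X : Type*} {d : X → X → ℝ}

theorem nonneg (hd : IsUltrametricOn d) (x y : X) : 0 ≤ d x y := hd.1 x y

theorem symm (hd : IsUltrametricOn d) (x y : X) : d x y = d y x := hd.2.1 x y

theorem eq_zero_iff (hd : IsUltrametricOn d) {x y : X} : d x y = 0 ↔ x = y := hd.2.2.1 x y

theorem self_eq_zero (hd : IsUltrametricOn d) (x : X) : d x x = 0 := hd.eq_zero_iff.2 rfl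

theorem le_max (hd : IsUltrametricOn d) (x y z : X) : d x y ≤ max (d x z) (d z y) :=
  hd.2.2.2 x y z

theorem pos_of_ne (hd : IsUltrametricOn d) {x y : X} (h : x ≠ y) : 0 < d x y :=
  (hd.nonneg x y).lt_of_ne' (mt hd.eq_zero_iff.1 h)

theorem dist_eq_left_of_lt (hd : IsUltrametricOn d) {x y z : X} (h : d y z < d x y) :
    d x z = d x y := by
  refine le_antisymm ((hd.le_max x z y).trans (max_le le_rfl h.le)) ?_
  by_contra! hlt
  have := hd.le_max x y z
  rw [hd.symm z y] at this
  exact (this.trans_lt (max_lt hlt h)).false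

theorem dist_eq_right_of_lt (hd : IsUltrametricOn d) {x y z : X} (h : d x y < d y z) :
    d x z = d y z := by
  rw [hd.symm x z, hd.symm y z]
  exact hd.dist_eq_left_of_lt (by rwa [hd.symm, hd.symm z])

theorem comp_injective (hd : IsUltrametricOn d) {Z : Type*} {f : Z → X}
    (hf : Function.Injective f) : IsUltrametricOn fun a b => d (f a) (f b) :=
  ⟨fun _ _ => hd.nonneg _ _, fun _ _ => hd.symm _ _,
    fun _ _ => hd.eq_zero_iff.trans hf.eq_iff, fun _ _ _ => hd.le_max _ _ _⟩

theorem injective_of_isometry (hd : IsUltrametricOn d) {Y : Type*} {ρ : Y → Y → ℝ}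
    (hρ : IsUltrametricOn ρ) {Φ : X → Y} (hΦ : ∀ x y, ρ (Φ x) (Φ y) = d x y) :
    Function.Injective Φ := fun x y h => hd.eq_zero_iff.1 (by rw [← hΦ, h, hρ.self_eq_zero])

end IsUltrametricOn

section Diam

variable {X : Type*} {d : X → X → ℝ}

theorem setDiam_le {A : Set X} (hA : A.Nonempty) {t : ℝ} (h : ∀ x ∈ A, ∀ y ∈ A, d x y ≤ t) :
    setDiam d A ≤ t := by
  obtain ⟨a, ha⟩ := hA
  exact csSup_le ⟨_, a, ha, a, ha, rfl⟩ (by rintro r ⟨x, hx, y, hy, rfl⟩; exact h x hx y hy)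

variable [Finite X]

theorem finite_setDiam_set (A : Set X) : {r | ∃ x ∈ A, ∃ y ∈ A, r = d x y}.Finite :=
  (finite_range fun p : X × X => d p.1 p.2).subset <| by
    rintro r ⟨x, -, y, -, rfl⟩
    exact ⟨(x, y), rfl⟩

theorem le_setDiam {A : Set X} {x y : X} (hx : x ∈ A) (hy : y ∈ A) : d x y ≤ setDiam d A :=
  le_csSup (finite_setDiam_set A).bddAbove ⟨x, hx, y, hy, rfl⟩

theorem exists_setDiam_eq {A : Set X} (hA : A.Nonempty) :
    ∃ x ∈ A, ∃ y ∈ A, setDiam d A = d x y := by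
  obtain ⟨a, ha⟩ := hA
  have hne : {r | ∃ x ∈ A, ∃ y ∈ A, r = d x y}.Nonempty := ⟨_, a, ha, a, ha, rfl⟩
  exact hne.csSup_mem (finite_setDiam_set A)

theorem setDiam_mono {A B : Set X} (hA : A.Nonempty) (hAB : A ⊆ B) : setDiam d A ≤ setDiam d B :=
  setDiam_le hA fun _ hx _ hy => le_setDiam (hAB hx) (hAB hy)

theorem setDiam_nonneg (hd : IsUltrametricOn d) {A : Set X} (hA : A.Nonempty) :
    0 ≤ setDiam d A :=
  let ⟨a, ha⟩ := hA
  (hd.nonneg a a).trans (le_setDiam ha ha)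

theorem setDiam_pos (hd : IsUltrametricOn d) {A : Set X} (hA : A.Nontrivial) :
    0 < setDiam d A :=
  let ⟨_, hx, _, hy, hxy⟩ := hA
  (hd.pos_of_ne hxy).trans_le (le_setDiam hx hy)

end Diam

namespace IsOpenBallOf

variable {X : Type*} {d : X → X → ℝ} {B B' : Set X}

theorem nonempty (hd : IsUltrametricOn d) (hB : IsOpenBallOf d B) : B.Nonempty := by
  obtain ⟨c, r, hr, rfl⟩ := hB
  exact ⟨c, by simpa [hd.self_eq_zero] using hr⟩

variable [Finite X]

theorem eq_closedBall (hd : IsUltrametricOn d) (hB : IsOpenBallOf d B) {b : X} (hb : b ∈ B) :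
    B = {y | d b y ≤ setDiam d B} := by
  obtain ⟨c, r, hr, rfl⟩ := hB
  have hdiam : setDiam d {x | d c x < r} < r := by
    obtain ⟨x, hx, y, hy, hxy⟩ := exists_setDiam_eq ⟨b, hb⟩
    rw [hxy]
    refine (hd.le_max x y c).trans_lt (max_lt ?_ hy)
    rwa [hd.symm]
  ext y
  refine ⟨fun hy => le_setDiam hb hy, fun hy => ?_⟩
  exact (hd.le_max c y b).trans_lt (max_lt hb (hy.trans_lt hdiam))

theorem eq_of_setDiam_eq (hd : IsUltrametricOn d) (hB : IsOpenBallOf d B)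
    (hB' : IsOpenBallOf d B') {b : X} (hb : b ∈ B) (hb' : b ∈ B')
    (h : setDiam d B = setDiam d B') : B = B' := by
  rw [hB.eq_closedBall hd hb, hB'.eq_closedBall hd hb', h]

theorem subset_or_subset (hd : IsUltrametricOn d) (hB : IsOpenBallOf d B)
    (hB' : IsOpenBallOf d B') {b : X} (hb : b ∈ B) (hb' : b ∈ B') : B ⊆ B' ∨ B' ⊆ B := by
  rw [hB.eq_closedBall hd hb, hB'.eq_closedBall hd hb']
  rcases le_total (setDiam d B) (setDiam d B') with h | h
  · exact .inl fun y hy => le_trans hy h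
  · exact .inr fun y hy => le_trans hy h

theorem setDiam_lt_of_ssubset (hd : IsUltrametricOn d) (hB : IsOpenBallOf d B)
    (hB' : IsOpenBallOf d B') (h : B ⊂ B') : setDiam d B < setDiam d B' := by
  obtain ⟨b, hb⟩ := hB.nonempty hd
  refine (setDiam_mono ⟨b, hb⟩ h.1).lt_of_ne fun heq => h.ne ?_
  exact hB.eq_of_setDiam_eq hd hB' hb (h.1 hb) heq

end IsOpenBallOf

section Balls

variable {X : Type*} [Finite X] {d : X → X → ℝ}

/-- Enlarge the radius up to the next distance from the center. -/
theorem isOpenBallOf_closedBall (b : X) {t : ℝ} (ht : 0 ≤ t) :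
    IsOpenBallOf d {y | d b y ≤ t} := by
  set S := range (d b) ∩ Ioi t
  rcases S.eq_empty_or_nonempty with hS | hS
  · refine ⟨b, t + 1, by linarith, ?_⟩
    ext y
    have hle : d b y ≤ t := not_lt.1 fun h => eq_empty_iff_forall_notMem.1 hS _ ⟨⟨y, rfl⟩, h⟩
    exact ⟨fun _ => show d b y < t + 1 by linarith, fun _ => hle⟩
  · obtain ⟨⟨y₀, hy₀⟩, hty₀⟩ := hS.csInf_mem ((finite_range (d b)).inter_of_left _)
    refine ⟨b, sInf S, ht.trans_lt hty₀, ?_⟩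
    ext y
    refine ⟨fun hy => show d b y < sInf S from hy.trans_lt hty₀, fun hy => ?_⟩
    by_contra hty
    have hyS : d b y ∈ S := ⟨⟨y, rfl⟩, show t < d b y from lt_of_not_ge hty⟩
    exact not_lt_of_ge (csInf_le ((finite_range (d b)).inter_of_left _).bddBelow hyS) hy

theorem isOpenBallOf_singleton (hd : IsUltrametricOn d) (x : X) : IsOpenBallOf d {x} := by
  convert isOpenBallOf_closedBall (d := d) x le_rfl using 1
  ext y
  simp only [mem_singleton_iff, mem_ofPred_eq]
  refine ⟨fun h => h ▸ (hd.self_eq_zero y).le, fun h => ?_⟩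
  exact (hd.eq_zero_iff.1 (le_antisymm h (hd.nonneg x y))).symm

theorem isOpenBallOf_univ (hd : IsUltrametricOn d) [Nonempty X] :
    IsOpenBallOf d (univ : Set X) := by
  obtain ⟨x⟩ := ‹Nonempty X›
  convert isOpenBallOf_closedBall (d := d) x (setDiam_nonneg hd (univ_nonempty (α := X)))
  ext y
  simpa using le_setDiam (d := d) (mem_univ x) (mem_univ y)

end Balls

section Centers

variable {X : Type*} {d : X → X → ℝ}

def IsCenterOf (d : X → X → ℝ) (D : Set X) (c : X) : Prop :=
  c ∈ D ∧ ∀ x ∈ D, x ≠ c → d x c = setDiam d D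

theorem isCenterOf_singleton (x : X) : IsCenterOf d {x} x :=
  ⟨rfl, fun _ hy hne => absurd hy hne⟩

variable [Finite X]

theorem IsOpenBallOf.isCenteredSphereOf_iff (hd : IsUltrametricOn d) {D : Set X}
    (hD : IsOpenBallOf d D) : IsCenteredSphereOf d D ↔ ∃ c, IsCenterOf d D c := by
  constructor
  · rintro ⟨c, hc, r, hr, hD'⟩
    have hsphere : ∀ x ∈ D, x ≠ c → d x c = r := fun x hx hxc => by
      rw [hD'] at hx
      exact hx.resolve_right hxc
    have hle_r : ∀ x ∈ D, d x c ≤ r := fun x hx => by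
      rcases eq_or_ne x c with rfl | h
      · exact (hd.self_eq_zero x).trans_le hr
      · exact (hsphere x hx h).le
    have hle : setDiam d D ≤ r := setDiam_le ⟨c, hc⟩ fun x hx y hy =>
      (hd.le_max x y c).trans (max_le (hle_r x hx) (by rw [hd.symm]; exact hle_r y hy))
    refine ⟨c, hc, fun x hx hxc => ?_⟩
    rw [hsphere x hx hxc]
    exact le_antisymm (hsphere x hx hxc ▸ le_setDiam hx hc) hle
  · rintro ⟨c, hc, hcD⟩
    refine ⟨c, hc, setDiam d D, setDiam_nonneg hd ⟨c, hc⟩, ?_⟩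
    ext x
    refine ⟨fun hx => (eq_or_ne x c).elim .inr fun h => .inl (hcD x hx h), ?_⟩
    rintro (hx | rfl)
    · rw [hD.eq_closedBall hd hc]
      exact (hd.symm c x).trans_le hx.le
    · exact hc

theorem IsCenterOf.eq_of_nontrivial (hd : IsUltrametricOn d) {D D' : Set X} {c : X}
    (hD : IsOpenBallOf d D) (hD' : IsOpenBallOf d D') (hc : IsCenterOf d D c)
    (hc' : IsCenterOf d D' c) (hnt : D.Nontrivial) (hnt' : D'.Nontrivial) : D = D' := by
  refine hD.eq_of_setDiam_eq hd hD' hc.1 hc'.1 ?_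
  obtain ⟨x, hx, hxc⟩ := hnt.exists_ne c
  obtain ⟨x', hx', hxc'⟩ := hnt'.exists_ne c
  rcases hD.subset_or_subset hd hD' hc.1 hc'.1 with h | h
  · rw [← hc.2 x hx hxc, hc'.2 x (h hx) hxc]
  · rw [← hc'.2 x' hx' hxc', hc.2 x' (h hx') hxc']

end Centers

section ParentBall

variable {X : Type*} {d : X → X → ℝ}

def IsParentBall (d : X → X → ℝ) (B P : Set X) : Prop :=
  IsOpenBallOf d P ∧ B ⊂ P ∧ ∀ C, IsOpenBallOf d C → B ⊂ C → P ⊆ C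

variable [Finite X]

theorem exists_isParentBall (hd : IsUltrametricOn d) [Nonempty X] {B : Set X}
    (hB : IsOpenBallOf d B) (hBu : B ≠ univ) : ∃ P, IsParentBall d B P := by
  set S := {C : Set X | IsOpenBallOf d C ∧ B ⊂ C}
  have hS : S.Nonempty := ⟨univ, isOpenBallOf_univ hd, ssubset_univ_iff.2 hBu⟩
  obtain ⟨P, ⟨hP, hBP⟩, hmin⟩ := S.toFinite.exists_minimalFor id S hS
  refine ⟨P, hP, hBP, fun C hC hBC => ?_⟩
  obtain ⟨b, hb⟩ := hB.nonempty hd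
  exact (hP.subset_or_subset hd hC (hBP.1 hb) (hBC.1 hb)).elim id
    fun hCP => hmin ⟨hC, hBC⟩ hCP

theorem IsParentBall.setDiam_le_dist (hd : IsUltrametricOn d) {B P : Set X}
    (hP : IsParentBall d B P) (hB : IsOpenBallOf d B) {b y : X} (hb : b ∈ B) (hy : y ∉ B) :
    setDiam d P ≤ d b y := by
  set C := {z | d b z ≤ d b y}
  have hC : IsOpenBallOf d C := isOpenBallOf_closedBall b (hd.nonneg b y)
  have hbC : b ∈ C := (hd.self_eq_zero b).trans_le (hd.nonneg b y)
  have hyC : y ∈ C := show d b y ≤ d b y from le_rfl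
  have hBC : B ⊂ C := (ssubset_iff_of_subset <| (hB.subset_or_subset hd hC hb hbC).resolve_right
    fun hCB => hy (hCB hyC)).2 ⟨y, hyC, hy⟩
  calc setDiam d P ≤ setDiam d C := setDiam_mono (hP.1.nonempty hd) (hP.2.2 C hC hBC)
    _ ≤ d b y := setDiam_le ⟨b, hbC⟩ fun x hx z hz =>
        (hd.le_max x z b).trans (max_le (by rw [hd.symm]; exact hx) hz)

end ParentBall

section WalkMax

open SimpleGraph

variable {V : Type*} {G : SimpleGraph V} {l : V → ℝ} {u v : V}

theorem walkMax_nil : walkMax l (Walk.nil : G.Walk u u) = max (l u) 0 := rfl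

theorem walkMax_cons {w : V} (h : G.Adj u v) (q : G.Walk v w) :
    walkMax l (Walk.cons h q) = max (l u) (walkMax l q) := rfl

theorem walkMax_nonneg (q : G.Walk u v) : 0 ≤ walkMax l q := by
  induction q with
  | nil => exact le_max_right _ _
  | cons _ _ ih => exact ih.trans (le_max_right _ _)

theorem le_walkMax {q : G.Walk u v} {z : V} (hz : z ∈ q.support) : l z ≤ walkMax l q := by
  induction q with
  | nil =>
    rw [Walk.support_nil, List.mem_singleton] at hz
    exact hz ▸ le_max_left _ _
  | cons h q ih =>
    rw [Walk.support_cons, List.mem_cons] at hz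
    rcases hz with rfl | hz
    · exact le_max_left _ _
    · exact (ih hz).trans (le_max_right _ _)

theorem walkMax_le {q : G.Walk u v} {c : ℝ} (hc : 0 ≤ c) (h : ∀ z ∈ q.support, l z ≤ c) :
    walkMax l q ≤ c := by
  induction q with
  | nil => exact max_le (h _ (Walk.start_mem_support _)) hc
  | cons _ q ih =>
    exact max_le (h _ (Walk.start_mem_support _))
      (ih fun z hz => h z (Walk.support_cons _ _ ▸ List.mem_cons_of_mem _ hz))

theorem walkMax_lt {q : G.Walk u v} {c : ℝ} (hc : 0 < c) (h : ∀ z ∈ q.support, l z < c) :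
    walkMax l q < c := by
  induction q with
  | nil => exact max_lt (h _ (Walk.start_mem_support _)) hc
  | cons _ q ih =>
    exact max_lt (h _ (Walk.start_mem_support _))
      (ih fun z hz => h z (Walk.support_cons _ _ ▸ List.mem_cons_of_mem _ hz))

theorem exists_eq_walkMax {q : G.Walk u v} (hq : walkMax l q ≠ 0) :
    ∃ z ∈ q.support, l z = walkMax l q := by
  induction q with
  | nil =>
    rw [walkMax_nil] at hq ⊢
    exact ⟨_, Walk.start_mem_support _, ((max_choice _ _).resolve_right hq).symm⟩
  | cons h q ih =>
    rw [walkMax_cons] at hq ⊢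
    rcases max_choice (l _) (walkMax l q) with hmax | hmax
    · exact ⟨_, Walk.start_mem_support _, hmax.symm⟩
    · obtain ⟨z, hz, hlz⟩ := ih (hmax ▸ hq)
      exact ⟨z, Walk.support_cons _ _ ▸ List.mem_cons_of_mem _ hz, hlz.trans hmax.symm⟩

end WalkMax

section UGVL

open SimpleGraph

variable {Y : Type*} {ρ : Y → Y → ℝ} {T : SimpleGraph Y} {l : Y → ℝ}

theorem GeneratedBy.exists_isPath (hgen : GeneratedBy ρ T l) (u v : Y) :
    ∃ q : T.Walk u v, q.IsPath := by
  classical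
  obtain ⟨q⟩ := hgen.1.connected.preconnected u v
  exact ⟨q.bypass, q.bypass_isPath⟩

theorem GeneratedBy.label_le (hgen : GeneratedBy ρ T l) {w y : Y} (hwy : w ≠ y) : l w ≤ ρ w y := by
  obtain ⟨q, hq⟩ := hgen.exists_isPath w y
  rw [hgen.2.2.2 w y hwy q hq]
  exact le_walkMax q.start_mem_support

/-- Take a vertex of maximal label on the path from `a` to `b`. -/
theorem GeneratedBy.exists_isolated_near (hρ : IsUltrametricOn ρ) (hgen : GeneratedBy ρ T l)
    {a b : Y} (hab : a ≠ b) : ∃ w, ρ a w ≤ ρ a b ∧ ∀ y, y ≠ w → ρ a b ≤ ρ w y := by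
  classical
  obtain ⟨q, hq⟩ := hgen.exists_isPath a b
  have hqab : ρ a b = walkMax l q := hgen.2.2.2 a b hab q hq
  obtain ⟨w, hw, hlw⟩ := exists_eq_walkMax (hqab ▸ (hρ.pos_of_ne hab).ne')
  refine ⟨w, ?_, fun y hyw => hqab ▸ hlw ▸ hgen.label_le hyw.symm⟩
  rcases eq_or_ne a w with rfl | haw
  · rw [hρ.self_eq_zero]
    exact hρ.nonneg _ _
  rw [hgen.2.2.2 a w haw _ (hq.takeUntil hw), hqab]
  exact walkMax_le (walkMax_nonneg q) fun z hz =>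
    le_walkMax (q.support_takeUntil_subset_support hw hz)

end UGVL

section ParentGraph

open SimpleGraph

variable {V : Type*} {r : V} {p : V → V} {l : V → ℝ}

def parentGraph (r : V) (p : V → V) : SimpleGraph V :=
  SimpleGraph.fromRel fun z z' => z ≠ r ∧ p z = z'

theorem parentGraph_adj (hl : ∀ z, z ≠ r → l z < l (p z)) {a b : V} :
    (parentGraph r p).Adj a b ↔ (a ≠ r ∧ p a = b) ∨ (b ≠ r ∧ p b = a) := by
  rw [parentGraph, fromRel_adj]
  refine ⟨And.right, fun h => ⟨?_, h⟩⟩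
  rintro rfl
  rcases h with ⟨ha, h⟩ | ⟨ha, h⟩ <;> exact (hl a ha).ne' (congrArg l h)

theorem parentGraph_adj_of_le (hl : ∀ z, z ≠ r → l z < l (p z)) {a b : V}
    (hab : (parentGraph r p).Adj a b) (hle : l a ≤ l b) : a ≠ r ∧ p a = b :=
  ((parentGraph_adj hl).1 hab).resolve_right fun ⟨hb, h⟩ => (hl b hb).not_ge (h ▸ hle)

theorem parentGraph_reachable [Finite V] (hl : ∀ z, z ≠ r → l z < l (p z)) (z : V) :
    (parentGraph r p).Reachable z r := by
  induction hn : {y | l z < l y}.ncard using Nat.strong_induction_on generalizing z with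
  | _ n ih =>
  rcases eq_or_ne z r with rfl | hz
  · rfl
  have hadj : (parentGraph r p).Adj z (p z) := (parentGraph_adj hl).2 (.inl ⟨hz, rfl⟩)
  refine hadj.reachable.trans (ih _ ?_ (p z) rfl)
  rw [← hn]
  refine ncard_lt_ncard ⟨fun y hy => (hl z hz).trans hy, fun h => ?_⟩ (toFinite _)
  exact lt_irrefl (l (p z)) (h (show l z < l (p z) from hl z hz))

/-- On a cycle, the two neighbours of a vertex of least label would both be its parent. -/
theorem isAcyclic_parentGraph (hl : ∀ z, z ≠ r → l z < l (p z)) :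
    (parentGraph r p).IsAcyclic := by
  classical
  intro v c hc
  obtain ⟨w, hw, hmin⟩ :=
    c.support.toFinset.exists_min_image l ⟨v, List.mem_toFinset.2 c.start_mem_support⟩
  rw [List.mem_toFinset] at hw
  have hc' := hc.rotate hw
  have hle : ∀ y ∈ (c.rotate w hw).support, l w ≤ l y := fun y hy =>
    hmin y (List.mem_toFinset.2 ((c.mem_support_rotate_iff w hw).1 hy))
  have hnil : ¬ (c.rotate w hw).Nil := hc'.not_nil
  have hsnd := parentGraph_adj_of_le hl (Walk.adj_snd hnil) (hle _ (Walk.getVert_mem_support _ _))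
  have hpen := parentGraph_adj_of_le hl (Walk.adj_penultimate hnil).symm
    (hle _ (Walk.getVert_mem_support _ _))
  exact hc'.snd_ne_penultimate (hsnd.2.symm.trans hpen.2)

theorem isTree_parentGraph [Finite V] (hl : ∀ z, z ≠ r → l z < l (p z)) :
    (parentGraph r p).IsTree :=
  ⟨(connected_iff_exists_forall_reachable _).2 ⟨r, fun z => (parentGraph_reachable hl z).symm⟩,
    isAcyclic_parentGraph hl⟩

/-- A path from `c` that avoids `p c` can only descend. -/
theorem label_lt_parent_of_isPath (hl : ∀ z, z ≠ r → l z < l (p z)) {c v : V}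
    {q : (parentGraph r p).Walk c v} (hq : q.IsPath) (hc : c ≠ r) (hpc : p c ∉ q.support) :
    ∀ z ∈ q.support, l z < l (p c) := by
  induction q with
  | nil =>
    intro z hz
    rw [Walk.support_nil, List.mem_singleton] at hz
    subst hz
    exact hl _ hc
  | @cons c c' v h q ih =>
    obtain ⟨hq', hcq⟩ := Walk.cons_isPath_iff _ _ |>.1 hq
    rw [Walk.support_cons, List.mem_cons, not_or] at hpc
    rcases (parentGraph_adj hl).1 h with ⟨-, hpc'⟩ | ⟨hc', rfl⟩
    · exact absurd (hpc' ▸ q.start_mem_support) hpc.2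
    intro z hz
    rw [Walk.support_cons, List.mem_cons] at hz
    rcases hz with rfl | hz
    · exact hl _ hc
    · exact (ih hq' hc' hcq z hz).trans (hl _ hc)

variable {ρ : V → V → ℝ}

theorem dist_le_walkMax_parentGraph (hρ : IsUltrametricOn ρ) (hl : ∀ z, z ≠ r → l z < l (p z))
    (hedge : ∀ z, z ≠ r → ρ z (p z) = l (p z)) {u v : V} (q : (parentGraph r p).Walk u v) :
    ρ u v ≤ walkMax l q := by
  induction q with
  | nil => exact (hρ.self_eq_zero _).trans_le (walkMax_nonneg _)
  | @cons u u' v h q ih =>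
    have hedge' : ρ u u' ≤ max (l u) (l u') := by
      rcases (parentGraph_adj hl).1 h with ⟨hu, rfl⟩ | ⟨hu', rfl⟩
      · exact (hedge u hu).trans_le (le_max_right _ _)
      · exact (hρ.symm _ _).trans_le ((hedge u' hu').trans_le (le_max_left _ _))
    rw [walkMax_cons]
    refine (hρ.le_max u v u').trans (max_le (hedge'.trans ?_) (ih.trans (le_max_right _ _)))
    exact max_le_max le_rfl (le_walkMax q.start_mem_support)

theorem dist_eq_walkMax_parentGraph (hρ : IsUltrametricOn ρ) (hl0 : ∀ z, 0 ≤ l z)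
    (hl : ∀ z, z ≠ r → l z < l (p z)) (hedge : ∀ z, z ≠ r → ρ z (p z) = l (p z))
    (hsib : ∀ z z', z ≠ r → z' ≠ r → z ≠ z' → p z = p z' → ρ z z' = l (p z))
    {u v : V} (q : (parentGraph r p).Walk u v) (hq : q.IsPath) (huv : u ≠ v) :
    ρ u v = walkMax l q := by
  induction q with
  | nil => exact absurd rfl huv
  | @cons u u' v h q ih =>
    obtain ⟨hqp, huq⟩ := Walk.cons_isPath_iff _ _ |>.1 hq
    rw [walkMax_cons]
    rcases (parentGraph_adj hl).1 h with ⟨hu, rfl⟩ | ⟨hu', rfl⟩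
    · have hM : l (p u) ≤ walkMax l q := le_walkMax q.start_mem_support
      rw [max_eq_right ((hl u hu).le.trans hM)]
      cases q with
      | nil => rw [walkMax_nil, max_eq_left (hl0 _), hedge u hu]
      | @cons _ c _ h' q' =>
        obtain ⟨hq', hpuq'⟩ := Walk.cons_isPath_iff _ _ |>.1 hqp
        have hIH := ih hqp fun h => hpuq' (h ▸ q'.end_mem_support)
        rcases hM.lt_or_eq with hlt | heq
        · rw [← hIH] at hlt ⊢
          exact hρ.dist_eq_right_of_lt (hedge u hu ▸ hlt)
        -- the path climbs no further than `p u`, so it next descends to a sibling `c` of `u`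
        have hcmem : c ∈ (Walk.cons h' q').support := Walk.support_cons _ _ ▸
          List.mem_cons_of_mem _ q'.start_mem_support
        obtain ⟨hc, hpc⟩ := parentGraph_adj_of_le hl h'.symm
          (heq ▸ le_walkMax hcmem : l c ≤ l (p u))
        have hcu : u ≠ c := fun h => huq (h ▸ hcmem)
        have hlow : walkMax l q' < l (p c) := walkMax_lt ((hl0 u).trans_lt (hpc ▸ hl u hu))
          (label_lt_parent_of_isPath hl hq' hc (hpc ▸ hpuq'))
        have hcv : ρ c v < ρ u c := by
          rw [hsib u c hu hc hcu hpc.symm, ← hpc]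
          exact (dist_le_walkMax_parentGraph hρ hl hedge q').trans_lt hlow
        rw [← heq, hρ.dist_eq_left_of_lt hcv, hsib u c hu hc hcu hpc.symm]
    · have hlow : walkMax l q < l (p u') :=
        walkMax_lt ((hl0 u').trans_lt (hl u' hu')) (label_lt_parent_of_isPath hl hqp hu' huq)
      have hu'v : ρ u' v < ρ (p u') u' := by
        rw [hρ.symm (p u'), hedge u' hu']
        exact (dist_le_walkMax_parentGraph hρ hl hedge q).trans_lt hlow
      rw [max_eq_left hlow.le, hρ.dist_eq_left_of_lt hu'v, hρ.symm (p u'), hedge u' hu']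

theorem generatedBy_parentGraph [Finite V] (hρ : IsUltrametricOn ρ) (hl0 : ∀ z, 0 ≤ l z)
    (hl : ∀ z, z ≠ r → l z < l (p z)) (hedge : ∀ z, z ≠ r → ρ z (p z) = l (p z))
    (hsib : ∀ z z', z ≠ r → z' ≠ r → z ≠ z' → p z = p z' → ρ z z' = l (p z)) :
    GeneratedBy ρ (parentGraph r p) l :=
  ⟨isTree_parentGraph hl, hl0, hρ.self_eq_zero, fun _ _ huv q hq =>
    dist_eq_walkMax_parentGraph hρ hl0 hl hedge hsib q hq huv⟩

end ParentGraph

section AllCentered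

variable {Z : Type*} {ρ : Z → Z → ℝ}

theorem IsParentBall.nontrivial {B P : Set Z} (hP : IsParentBall ρ B P) (hB : B.Nonempty) :
    P.Nontrivial := by
  obtain ⟨y, hyP, hyB⟩ := exists_of_ssubset hP.2.1
  obtain ⟨b, hb⟩ := hB
  exact ⟨y, hyP, b, hP.2.1.1 hb, fun h => hyB (h ▸ hb)⟩

variable [Finite Z]

theorem IsOpenBallOf.nontrivial_of_not_isCenteredSphereOf (hρ : IsUltrametricOn ρ) {D : Set Z}
    (hD : IsOpenBallOf ρ D) (hbad : ¬ IsCenteredSphereOf ρ D) : D.Nontrivial := by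
  rw [← not_subsingleton_iff]
  intro hsub
  obtain ⟨z, hz⟩ := hD.nonempty hρ
  rw [hsub.eq_singleton_of_mem hz] at hD hbad
  exact hbad ((hD.isCenteredSphereOf_iff hρ).2 ⟨z, isCenterOf_singleton z⟩)

/-- Choose a center for every ball with more than one point; the points chosen for no ball
get their singleton. -/
theorem exists_injective_isCenterOf (hρ : IsUltrametricOn ρ)
    (hcent : ∀ D, IsOpenBallOf ρ D → IsCenteredSphereOf ρ D) :
    ∃ β : Z → Set Z, (∀ z, IsOpenBallOf ρ (β z)) ∧ (∀ z, IsCenterOf ρ (β z) z) ∧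
      Function.Injective β ∧ ∀ D, IsOpenBallOf ρ D → D.Nontrivial → ∃ z, β z = D := by
  classical
  have : ∀ D : {D : Set Z // IsOpenBallOf ρ D ∧ D.Nontrivial}, ∃ c, IsCenterOf ρ D c :=
    fun D => (D.2.1.isCenteredSphereOf_iff hρ).1 (hcent _ D.2.1)
  choose ctr hctr using this
  have hinj : Function.Injective ctr := fun D D' h => Subtype.ext <|
    (hctr D).eq_of_nontrivial hρ D.2.1 D'.2.1 (h ▸ hctr D') D.2.2 D'.2.2
  set β : Z → Set Z := Function.extend ctr Subtype.val fun z => {z}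
  have hβ : ∀ z, (∃ D, ctr D = z ∧ β z = D.1) ∨ ((¬ ∃ D, ctr D = z) ∧ β z = {z}) := fun z => by
    by_cases h : ∃ D, ctr D = z
    · obtain ⟨D, rfl⟩ := h
      exact .inl ⟨D, rfl, hinj.extend_apply _ _ D⟩
    · exact .inr ⟨h, Function.extend_apply' _ _ _ h⟩
  refine ⟨β, fun z => ?_, fun z => ?_, fun z z' hzz' => ?_, fun D hD hnt => ?_⟩
  · rcases hβ z with ⟨D, -, hD⟩ | ⟨-, hz⟩
    · exact hD ▸ D.2.1
    · exact hz ▸ isOpenBallOf_singleton hρ z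
  · rcases hβ z with ⟨D, rfl, hD⟩ | ⟨-, hz⟩
    · exact hD ▸ hctr D
    · exact hz ▸ isCenterOf_singleton z
  · rcases hβ z with ⟨D, rfl, hD⟩ | ⟨hz, hβz⟩ <;> rcases hβ z' with ⟨D', rfl, hD'⟩ | ⟨hz', hβz'⟩
    · rw [hinj.eq_iff, ← Subtype.coe_inj, ← hD, ← hD', hzz']
    · exact (not_nontrivial_singleton ((hD.symm.trans (hzz'.trans hβz')) ▸ D.2.2)).elim
    · exact (not_nontrivial_singleton ((hD'.symm.trans (hzz'.symm.trans hβz)) ▸ D'.2.2)).elim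
    · exact singleton_injective (hβz ▸ hβz' ▸ hzz')
  · exact ⟨ctr ⟨D, hD, hnt⟩, hinj.extend_apply _ _ _⟩

/-- The tree of balls: each point `z` is the chosen center of a ball `β z` and is labeled by
`diam (β z)`; its parent is the chosen center of the smallest ball strictly containing `β z`. -/
theorem isUGVL_of_forall_isCenteredSphereOf [Nonempty Z] (hρ : IsUltrametricOn ρ)
    (hcent : ∀ D, IsOpenBallOf ρ D → IsCenteredSphereOf ρ D) : IsUGVL ρ := by
  obtain ⟨β, hball, hcenter, hinj, hsurj⟩ := exists_injective_isCenterOf hρ hcent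
  obtain ⟨r, hr⟩ : ∃ r, β r = univ := by
    rcases (univ : Set Z).subsingleton_or_nontrivial with h | h
    · obtain ⟨z⟩ := ‹Nonempty Z›
      exact ⟨z, eq_univ_of_forall fun y => h (mem_univ y) (mem_univ z) ▸ (hcenter z).1⟩
    · exact hsurj univ (isOpenBallOf_univ hρ) h
  have hparent : ∀ z, z ≠ r → ∃ P, IsParentBall ρ (β z) P := fun z hz =>
    exists_isParentBall hρ (hball z) fun h => hz (hinj (h.trans hr.symm))
  choose! P hP using hparent
  have hpoint : ∀ z, z ≠ r → ∃ z', β z' = P z := fun z hz =>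
    hsurj _ (hP z hz).1 ((hP z hz).nontrivial ⟨z, (hcenter z).1⟩)
  choose! p hp using hpoint
  have hmem : ∀ z, z ≠ r → z ∈ β (p z) := fun z hz => hp z hz ▸ (hP z hz).2.1.1 (hcenter z).1
  have hl : ∀ z, z ≠ r → setDiam ρ (β z) < setDiam ρ (β (p z)) := fun z hz =>
    hp z hz ▸ (hball z).setDiam_lt_of_ssubset hρ (hP z hz).1 (hP z hz).2.1
  have hclose : ∀ z z', z ≠ r → z' ≠ r → p z = p z' → ρ z z' < setDiam ρ (β (p z)) →
      z' ∈ β z := fun z z' hz _ _ hlt => by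
    by_contra hz'
    exact ((hp z hz ▸ (hP z hz).setDiam_le_dist hρ (hball z) (hcenter z).1 hz').trans_lt hlt).false
  refine ⟨parentGraph r p, fun z => setDiam ρ (β z), generatedBy_parentGraph hρ
    (fun z => setDiam_nonneg hρ ⟨z, (hcenter z).1⟩) hl (fun z hz => ?_)
    fun z z' hz hz' hzz' hpp => ?_⟩
  · exact (hcenter (p z)).2 z (hmem z hz) fun h => (hl z hz).ne (by rw [← h])
  · refine le_antisymm (le_setDiam (hmem z hz) (hpp ▸ hmem z' hz')) (not_lt.1 fun hlt => hzz' ?_)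
    -- each of `z`, `z'` lies in the ball of the other, so both balls have diameter `ρ z z'`
    have hz'z : z' ∈ β z := hclose z z' hz hz' hpp hlt
    have hzz'' : z ∈ β z' := hclose z' z hz' hz hpp.symm (by rwa [hρ.symm, ← hpp])
    refine hinj ((hball z).eq_of_setDiam_eq hρ (hball z') (hcenter z).1 hzz'' ?_)
    rw [← (hcenter z).2 z' hz'z hzz'.symm, ← (hcenter z').2 z hzz'' hzz', hρ.symm]

end AllCentered

section Apex

variable {X Y : Type*} {d : X → X → ℝ} {ρ : Y → Y → ℝ} {Φ : X → Y}

/-- The apexes of the balls that are not centered spheres are the points an UGVL-extension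
must add to `X`. -/
def IsApex (d : X → X → ℝ) (ρ : Y → Y → ℝ) (Φ : X → Y) (B : Set X) (w : Y) : Prop :=
  (∀ x ∈ B, ρ w (Φ x) ≤ setDiam d B) ∧ ∀ y, y ≠ w → setDiam d B ≤ ρ w y

theorem IsApex.dist_eq {B : Set X} {w : Y} (hw : IsApex d ρ Φ B w) (hwΦ : w ∉ range Φ)
    {x : X} (hx : x ∈ B) : ρ w (Φ x) = setDiam d B :=
  le_antisymm (hw.1 x hx) (hw.2 _ fun h => hwΦ ⟨x, h⟩)

theorem IsApex.restrict {Y₀ : Set Y} (hΦ : ∀ x, Φ x ∈ Y₀) {B : Set X} {w : Y₀}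
    (hw : IsApex d ρ Φ B w) : IsApex d (fun a b : Y₀ => ρ a b) (fun x => ⟨Φ x, hΦ x⟩) B w :=
  ⟨hw.1, fun y hy => hw.2 y fun h => hy (Subtype.ext h)⟩

theorem IsApex.nontrivial (hd : IsUltrametricOn d) (hρ : IsUltrametricOn ρ) {B : Set X} {w : Y}
    (hw : IsApex d ρ Φ B w) (hB : B.Nonempty) (hwΦ : w ∉ range Φ) : B.Nontrivial := by
  rw [← not_subsingleton_iff]
  intro hsub
  obtain ⟨b, hb⟩ := hB
  have hdiam : setDiam d B ≤ 0 := setDiam_le ⟨b, hb⟩ fun x hx y hy => by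
    rw [hsub hx hy, hd.self_eq_zero]
  exact hwΦ ⟨b, (hρ.eq_zero_iff.1 (le_antisymm ((hw.1 b hb).trans hdiam) (hρ.nonneg _ _))).symm⟩

variable [Finite X]

theorem exists_isApex (hd : IsUltrametricOn d) (hρ : IsUltrametricOn ρ) (hY : IsUGVL ρ)
    (hΦ : ∀ x y, ρ (Φ x) (Φ y) = d x y) {B : Set X} (hB : B.Nontrivial) :
    ∃ w, IsApex d ρ Φ B w := by
  obtain ⟨T, l, hgen⟩ := hY
  obtain ⟨u, hu, v, hv, huv⟩ := exists_setDiam_eq (d := d) hB.nonempty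
  have hne : Φ u ≠ Φ v := fun h => (setDiam_pos hd hB).ne' <| by
    rw [huv, ← hΦ, h, hρ.self_eq_zero]
  obtain ⟨w, hwu, hw⟩ := hgen.exists_isolated_near hρ hne
  rw [hΦ, ← huv] at hwu hw
  refine ⟨w, fun x hx => (hρ.le_max _ _ (Φ u)).trans (max_le ?_ ?_), hw⟩
  · rwa [hρ.symm]
  · exact (hΦ u x).trans_le (le_setDiam hu hx)

/-- If the apex of `B` were a point `Φ c`, then `c` would be a center of `B`. -/
theorem IsApex.notMem_range (hd : IsUltrametricOn d) (hρ : IsUltrametricOn ρ)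
    (hΦ : ∀ x y, ρ (Φ x) (Φ y) = d x y) {B : Set X} {w : Y} (hw : IsApex d ρ Φ B w)
    (hB : IsOpenBallOf d B) (hbad : ¬ IsCenteredSphereOf d B) : w ∉ range Φ := by
  rintro ⟨c, rfl⟩
  have hc : c ∈ B := by
    obtain ⟨b, hb⟩ := hB.nonempty hd
    rw [hB.eq_closedBall hd hb]
    exact (hd.symm b c).trans_le ((hΦ c b).symm.trans_le (hw.1 b hb))
  refine hbad ((hB.isCenteredSphereOf_iff hd).2 ⟨c, hc, fun x hx hxc => ?_⟩)
  refine le_antisymm (le_setDiam hx hc) ?_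
  rw [hd.symm, ← hΦ]
  exact hw.2 _ fun h => hxc (hd.injective_of_isometry hρ hΦ h)

theorem IsApex.eq_of_notMem_range (hd : IsUltrametricOn d) (hρ : IsUltrametricOn ρ)
    (hΦ : ∀ x y, ρ (Φ x) (Φ y) = d x y) {B B' : Set X} {w : Y} (hB : IsOpenBallOf d B)
    (hB' : IsOpenBallOf d B') (hw : IsApex d ρ Φ B w) (hw' : IsApex d ρ Φ B' w)
    (hwΦ : w ∉ range Φ) : B = B' := by
  have hsub : ∀ {C C' : Set X}, IsOpenBallOf d C → IsApex d ρ Φ C w → IsApex d ρ Φ C' w →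
      C' ⊆ C := fun {C C'} hC hwC hwC' x hx => by
    obtain ⟨c, hc⟩ := hC.nonempty hd
    have hdiam : setDiam d C' ≤ setDiam d C :=
      (hwC'.2 _ fun h => hwΦ ⟨c, h⟩).trans (hwC.1 c hc)
    rw [hC.eq_closedBall hd hc, mem_ofPred_eq, ← hΦ]
    refine (hρ.le_max _ _ w).trans (max_le ?_ ((hwC'.1 x hx).trans hdiam))
    rw [hρ.symm]
    exact hwC.1 c hc
  exact ((hsub hB hw hw').antisymm (hsub hB' hw' hw)).symm

end Apex

section ApexCover

variable {X Z : Type*} [Finite Z] {d : X → X → ℝ} {ρ : Z → Z → ℝ} {Φ : X → Z}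

theorem IsApex.mem_of_mem {B : Set X} {D : Set Z} {z : Z} (hw : IsApex d ρ Φ B z)
    (hρ : IsUltrametricOn ρ) (hD : IsOpenBallOf ρ D) (hnt : D.Nontrivial) (hz : z ∈ D)
    {b : X} (hb : b ∈ B) : Φ b ∈ D := by
  obtain ⟨y, hy, hyz⟩ := hnt.exists_ne z
  rw [hD.eq_closedBall hρ hz]
  exact ((hw.1 b hb).trans (hw.2 y hyz)).trans (le_setDiam hz hy)

variable [Finite X]

/-- Every point of `D` is within `diam (Φ ⁻¹' D)` of the image of `X`. -/
theorem preimage_isOpenBallOf_of_isApex (hd : IsUltrametricOn d) (hρ : IsUltrametricOn ρ)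
    (hΦ : ∀ x y, ρ (Φ x) (Φ y) = d x y)
    (hcover : ∀ z, z ∉ range Φ → ∃ B, IsOpenBallOf d B ∧ IsApex d ρ Φ B z)
    {D : Set Z} (hD : IsOpenBallOf ρ D) (hnt : D.Nontrivial) :
    IsOpenBallOf d (Φ ⁻¹' D) ∧ setDiam d (Φ ⁻¹' D) = setDiam ρ D := by
  obtain ⟨a, ha⟩ : ∃ a, Φ a ∈ D := by
    obtain ⟨z, hz⟩ := hD.nonempty hρ
    by_cases hzΦ : z ∈ range Φ
    · obtain ⟨a, rfl⟩ := hzΦ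
      exact ⟨a, hz⟩
    · obtain ⟨B, hB, hw⟩ := hcover z hzΦ
      obtain ⟨b, hb⟩ := hB.nonempty hd
      exact ⟨b, hw.mem_of_mem hρ hD hnt hz hb⟩
  set A := Φ ⁻¹' D
  have hA : IsOpenBallOf d A := by
    convert isOpenBallOf_closedBall a (setDiam_nonneg hρ ⟨_, ha⟩) using 1
    ext x
    exact (Set.ext_iff.1 (hD.eq_closedBall hρ ha) (Φ x)).trans (by rw [mem_ofPred_eq, hΦ]; rfl)
  have hclose : ∀ y ∈ D, ρ y (Φ a) ≤ setDiam d A := fun y hy => by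
    by_cases hyΦ : y ∈ range Φ
    · obtain ⟨x, rfl⟩ := hyΦ
      exact (hΦ x a).trans_le (le_setDiam hy ha)
    obtain ⟨B, hB, hw⟩ := hcover y hyΦ
    obtain ⟨b, hb⟩ := hB.nonempty hd
    have hBA : B ⊆ A := fun x hx => hw.mem_of_mem hρ hD hnt hy hx
    refine (hρ.le_max _ _ (Φ b)).trans (max_le ?_ ?_)
    · exact (hw.1 b hb).trans (setDiam_mono ⟨b, hb⟩ hBA)
    · exact (hΦ b a).trans_le (le_setDiam (hBA hb) ha)
  refine ⟨hA, le_antisymm (setDiam_le ⟨a, ha⟩ fun x hx y hy => (hΦ x y) ▸ le_setDiam hx hy) ?_⟩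
  obtain ⟨y₁, hy₁, y₂, hy₂, hy₁₂⟩ := exists_setDiam_eq (d := ρ) hnt.nonempty
  rw [hy₁₂]
  refine (hρ.le_max _ _ (Φ a)).trans (max_le (hclose y₁ hy₁) ?_)
  rw [hρ.symm]
  exact hclose y₂ hy₂

/-- `D` is centered at `Φ c` for a center `c` of its trace on `X`, or else at an apex of the
trace. -/
theorem forall_isCenteredSphereOf_of_isApex (hd : IsUltrametricOn d) (hρ : IsUltrametricOn ρ)
    (hΦ : ∀ x y, ρ (Φ x) (Φ y) = d x y)
    (hapex : ∀ B, IsOpenBallOf d B → ¬ IsCenteredSphereOf d B → ∃ w, IsApex d ρ Φ B w)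
    (hcover : ∀ z, z ∉ range Φ → ∃ B, IsOpenBallOf d B ∧ IsApex d ρ Φ B z)
    (D : Set Z) (hD : IsOpenBallOf ρ D) : IsCenteredSphereOf ρ D := by
  rw [hD.isCenteredSphereOf_iff hρ]
  rcases D.subsingleton_or_nontrivial with hsub | hnt
  · obtain ⟨z, hz⟩ := hD.nonempty hρ
    exact ⟨z, hz, fun x hx hxz => absurd (hsub hx hz) hxz⟩
  obtain ⟨hA, hdiam⟩ := preimage_isOpenBallOf_of_isApex hd hρ hΦ hcover hD hnt
  by_cases hAc : IsCenteredSphereOf d (Φ ⁻¹' D)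
  · obtain ⟨c, hcA, hc⟩ := (hA.isCenteredSphereOf_iff hd).1 hAc
    refine ⟨Φ c, hcA, fun y hy hyc => le_antisymm (le_setDiam hy hcA) ?_⟩
    by_cases hyΦ : y ∈ range Φ
    · obtain ⟨x, rfl⟩ := hyΦ
      rw [hΦ, hc x hy fun h => hyc (h ▸ rfl), hdiam]
    -- `y` is an apex of a ball containing a point `b ≠ c` of the trace
    obtain ⟨B, hB, hw⟩ := hcover y hyΦ
    obtain ⟨b, hb, hbc⟩ := (hw.nontrivial hd hρ (hB.nonempty hd) hyΦ).exists_ne c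
    calc setDiam ρ D = ρ (Φ b) (Φ c) := by rw [hΦ, hc b (hw.mem_of_mem hρ hD hnt hy hb) hbc, hdiam]
      _ ≤ max (ρ (Φ b) y) (ρ y (Φ c)) := hρ.le_max _ _ _
      _ ≤ ρ y (Φ c) := max_le ((hρ.symm _ _).trans_le ((hw.1 b hb).trans (hw.2 _ hyc.symm)))
          le_rfl
  · obtain ⟨w, hw⟩ := hapex _ hA hAc
    obtain ⟨a, ha⟩ := hA.nonempty hd
    have hwD : w ∈ D := by
      rw [hD.eq_closedBall hρ ha, mem_ofPred_eq, hρ.symm,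
        hw.dist_eq (hw.notMem_range hd hρ hΦ hA hAc) ha, hdiam]
    refine ⟨w, hwD, fun y hy hyw => le_antisymm (le_setDiam hy hwD) ?_⟩
    calc setDiam ρ D = setDiam d (Φ ⁻¹' D) := hdiam.symm
      _ ≤ ρ w y := hw.2 y hyw
      _ = ρ y w := hρ.symm _ _

end ApexCover

/-- `Φ X` together with one apex for every ball that is not a centered sphere. -/
theorem exists_ncard_eq_isUGVLExtension {X Y : Type*} [Finite X] [Nonempty X]
    {d : X → X → ℝ} {ρ : Y → Y → ℝ} (hd : IsUltrametricOn d) (hext : IsUGVLExtension d ρ) :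
    ∃ Y₀ : Set Y,
      Y₀.ncard = {B : Set X | IsOpenBallOf d B ∧ ¬ IsCenteredSphereOf d B}.ncard + Nat.card X ∧
      IsUGVLExtension d (fun a b : Y₀ => ρ a b) := by
  obtain ⟨hρ, hY, Φ, hΦ⟩ := hext
  set Bad := {B : Set X | IsOpenBallOf d B ∧ ¬ IsCenteredSphereOf d B}
  have : Nonempty Y := ⟨Φ (Classical.arbitrary X)⟩
  choose! w hw using fun B (hB : B ∈ Bad) =>
    exists_isApex hd hρ hY hΦ (hB.1.nontrivial_of_not_isCenteredSphereOf hd hB.2)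
  have hwΦ : ∀ B ∈ Bad, w B ∉ range Φ := fun B hB => (hw B hB).notMem_range hd hρ hΦ hB.1 hB.2
  set Y₀ := range Φ ∪ w '' Bad
  refine ⟨Y₀, ?_, ?_⟩
  · have hdisj : Disjoint (range Φ) (w '' Bad) := by
      rw [disjoint_right]
      rintro _ ⟨B, hB, rfl⟩
      exact hwΦ B hB
    rw [ncard_union_eq hdisj (toFinite _) (toFinite _), add_comm,
      ncard_range_of_injective (hd.injective_of_isometry hρ hΦ),
      InjOn.ncard_image fun B hB B' hB' (h : w B = w B') => (hw B hB).eq_of_notMem_range hd hρ hΦ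
        hB.1 hB'.1 (h ▸ hw B' hB') (hwΦ B hB)]
  have : Finite Y₀ := ((finite_range Φ).union ((toFinite Bad).image w)).to_subtype
  have hΦ₀ : ∀ x, Φ x ∈ Y₀ := fun x => .inl ⟨x, rfl⟩
  have : Nonempty Y₀ := ⟨⟨_, hΦ₀ (Classical.arbitrary X)⟩⟩
  have hρ₀ : IsUltrametricOn fun a b : Y₀ => ρ a b := hρ.comp_injective Subtype.val_injective
  refine ⟨hρ₀, isUGVL_of_forall_isCenteredSphereOf hρ₀ ?_, fun x => ⟨Φ x, hΦ₀ x⟩, hΦ⟩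
  refine forall_isCenteredSphereOf_of_isApex (Φ := fun x => ⟨Φ x, hΦ₀ x⟩) hd hρ₀ hΦ
    (fun B hB hbad => ?_) fun z hz => ?_
  · exact ⟨⟨w B, .inr ⟨B, ⟨hB, hbad⟩, rfl⟩⟩, (hw B ⟨hB, hbad⟩).restrict hΦ₀⟩
  · obtain ⟨z, ⟨x, rfl⟩ | ⟨B, hB, rfl⟩⟩ := z
    · exact absurd ⟨x, rfl⟩ hz
    · exact ⟨B, hB.1, (hw B hB).restrict hΦ₀⟩

/-- An UGVL-extension `(Y, ρ)` of a finite nonempty ultrametric space `(X, d)` is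
minimal iff `card Y = Δ(X, d) + card X`, where `Δ(X, d)` is the number of open balls
of `(X, d)` that are not centered spheres. -/
theorem stmt_18 {X Y : Type*} [Finite X] (hne : Nonempty X)
    (d : X → X → ℝ) (hd : IsUltrametricOn d)
    (ρ : Y → Y → ℝ) (hext : IsUGVLExtension d ρ) :
    IsMinimalUGVLExtension d ρ ↔
      Nat.card Y =
        {B : Set X | IsOpenBallOf d B ∧ ¬ IsCenteredSphereOf d B}.ncard + Nat.card X := by
  have := hne
  constructor
  · rintro ⟨-, hmin⟩
    obtain ⟨Y₀, hcard, hY₀⟩ := exists_ncard_eq_isUGVLExtension hd hext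
    have hY₀univ : Y₀ = univ := by_contra fun h => hmin Y₀ h hY₀
    rw [← hcard, hY₀univ, ncard_univ]
  · refine fun hcard => ⟨hext, fun Y₀ hY₀ hY₀ext => ?_⟩
    -- a proper subextension would contain an extension with `card Y` points
    have hX : 0 < Nat.card X := Nat.card_pos
    have : Finite Y := Nat.finite_of_card_ne_zero (by omega)
    obtain ⟨Y₁, hY₁card, -⟩ := exists_ncard_eq_isUGVLExtension hd hY₀ext
    have hY₁Y₀ : Y₁.ncard ≤ Y₀.ncard := (ncard_le_ncard (subset_univ Y₁)).trans_eq
      ((ncard_univ _).trans (Nat.card_coe_set_eq Y₀))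
    have hY₀Y : Y₀.ncard < Nat.card Y := ncard_univ Y ▸ ncard_lt_ncard (ssubset_univ_iff.2 hY₀)
    omega
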